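/- Let F₃ be the free group on three generators x, y, z, let G = F₃ × ℤ, and let γ = (x·y·z, 0) ∈ G. Then for every α in the centralizer ζ(γ) of γ in G and every g ∈ G, the images of the basis elements [α·g·α⁻¹] and [g] in Λ̃_γ(G) are equal; that is, the conjugation action of ζ(γ) on Λ̃_γ(G) is trivial. -/

import Mathlib

noncomputable section

/-- The group `G = F₃ × ℤ`, the fundamental group of the product of a thrice
punctured 2-disk with the circle. -/
abbrev G := FreeGroup (Fin 3) × Multiplicative ℤ

/-- The generator `x`. -/
def x : G := (FreeGroup.of 0, Multiplicative.ofAdd 0)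

/-- The generator `y`. -/
def y : G := (FreeGroup.of 1, Multiplicative.ofAdd 0)

/-- The generator `z`. -/
def z : G := (FreeGroup.of 2, Multiplicative.ofAdd 0)

/-- The element `γ = (x·y·z, 0)`. -/
def γ : G := x * y * z

/-- The basis element `[g]` of the free abelian group `ℤ[G]`. -/
def e (g : G) : G →₀ ℤ := Finsupp.single g 1

/-- The additive subgroup of `ℤ[G]` generated by all `[g] − [γⁿ·g·γᵐ]`,
all `[g] − [γⁿ·g⁻¹·γᵐ]`, and `[1]`. -/
def lamRel : AddSubgroup (G →₀ ℤ) :=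
  AddSubgroup.closure
    ({v | ∃ (g : G) (n m : ℤ), v = e g - e (γ ^ n * g * γ ^ m)} ∪
      {v | ∃ (g : G) (n m : ℤ), v = e g - e (γ ^ n * g⁻¹ * γ ^ m)} ∪ {e (1 : G)})

/-- The group `Λ̃_γ(G)`. -/
abbrev LamTilde := (G →₀ ℤ) ⧸ lamRel



section Aux

/-- Distinct free-group generators do not commute. -/
lemma FreeGroup.eq_of_commute_of {S : Type*} [DecidableEq S] {a b : S}
    (h : Commute (FreeGroup.of a) (FreeGroup.of b)) : a = b := by
  by_contra hne
  let f : FreeGroup S →* Equiv.Perm (Fin 3) :=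
    FreeGroup.lift (fun s => if s = a then Equiv.swap 0 1 else Equiv.swap 1 2)
  have hfa : f (FreeGroup.of a) = Equiv.swap 0 1 := by simp [f]
  have hfb : f (FreeGroup.of b) = Equiv.swap 1 2 := by simp [f, Ne.symm hne]
  have h2 : Commute (f (FreeGroup.of a)) (f (FreeGroup.of b)) := h.map f
  rw [hfa, hfb] at h2
  rw [Commute, SemiconjBy] at h2
  exact absurd h2 (by decide)

lemma freeGroup_isCyclic_of_subsingleton {T : Type*} [Subsingleton T] :
    IsCyclic (FreeGroup T) := by
  rcases isEmpty_or_nonempty T with hT | ⟨⟨t⟩⟩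
  · constructor
    refine ⟨1, fun w => ?_⟩
    have : w = 1 := by
      refine FreeGroup.induction_on (C := fun v => v = 1) w rfl
        (fun s => (hT.false s).elim) (fun s _ => (hT.false s).elim) ?_
      rintro u v rfl rfl; rw [one_mul]
    simp [this]
  · constructor
    refine ⟨FreeGroup.of t, fun w => ?_⟩
    refine FreeGroup.induction_on (C := fun v => v ∈ Subgroup.zpowers (FreeGroup.of t)) w
      (one_mem _) (fun s => ?_) (fun s hs => inv_mem hs) (fun u v hu hv => mul_mem hu hv)
    rw [show (FreeGroup.of s : FreeGroup T) = FreeGroup.of t from congrArg _ (Subsingleton.elim s t)]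
    exact Subgroup.mem_zpowers _

lemma isCyclic_of_commutative_of_isFreeGroup {K : Type*} [Group K] [IsFreeGroup K]
    (hcomm : ∀ a b : K, Commute a b) : IsCyclic K := by
  classical
  have key : ∀ a : IsFreeGroup.Generators K,
      IsFreeGroup.toFreeGroup (G := K) (IsFreeGroup.of a) = FreeGroup.of a := by
    intro a
    simp [IsFreeGroup.toFreeGroup, IsFreeGroup.of]
  have hgen : ∀ a b : IsFreeGroup.Generators K, a = b := by
    intro a b
    apply FreeGroup.eq_of_commute_of (a := a) (b := b)
    have h2 := (hcomm (IsFreeGroup.of a) (IsFreeGroup.of b)).map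
      (IsFreeGroup.toFreeGroup (G := K))
    rwa [key, key] at h2
  have : Subsingleton (IsFreeGroup.Generators K) := ⟨hgen⟩
  have : IsCyclic (FreeGroup (IsFreeGroup.Generators K)) :=
    freeGroup_isCyclic_of_subsingleton
  exact isCyclic_of_surjective (IsFreeGroup.toFreeGroup (G := K)).symm
    (IsFreeGroup.toFreeGroup (G := K)).symm.surjective

/-- If `u` commutes with `w` in a free group, then both are integer powers of a
common element. -/
lemma exists_common_power {S : Type*} [DecidableEq S] {u w : FreeGroup S}
    (h : Commute u w) :
    ∃ c : FreeGroup S, (∃ n : ℤ, u = c ^ n) ∧ (∃ m : ℤ, w = c ^ m) := by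
  classical
  set H := Subgroup.closure ({u, w} : Set (FreeGroup S)) with hH
  have hsub : ({u, w} : Set (FreeGroup S)) ⊆ Subgroup.centralizer {u, w} := by
    rintro a (rfl | rfl) <;> refine Subgroup.mem_centralizer_iff.2 ?_ <;>
      rintro b (rfl | rfl)
    · rfl
    · exact h.symm.eq
    · exact h.eq
    · rfl
  have h1 : H ≤ Subgroup.centralizer ({u, w} : Set (FreeGroup S)) :=
    (Subgroup.closure_le _).2 hsub
  have h2 : H ≤ Subgroup.centralizer (H : Set (FreeGroup S)) := by
    refine (Subgroup.closure_le _).2 ?_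
    intro s0 hs0
    refine Subgroup.mem_centralizer_iff.2 ?_
    intro k hk
    exact (Subgroup.mem_centralizer_iff.1 (h1 hk) s0 hs0).symm
  have hcomm : ∀ a b : H, Commute a b := by
    rintro ⟨a, ha⟩ ⟨b, hb⟩
    exact Subtype.ext (Subgroup.mem_centralizer_iff.1 (h2 ha) b hb).symm
  have : IsCyclic H := isCyclic_of_commutative_of_isFreeGroup hcomm
  obtain ⟨⟨c, hc⟩, hgen⟩ := this.exists_generator
  have hu : u ∈ H := Subgroup.subset_closure (by simp)
  have hw : w ∈ H := Subgroup.subset_closure (by simp)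
  refine ⟨c, ?_, ?_⟩
  · obtain ⟨n, hn⟩ := hgen ⟨u, hu⟩
    refine ⟨n, ?_⟩
    have := congrArg (Subtype.val) hn
    simpa [SubgroupClass.coe_zpow] using this.symm
  · obtain ⟨m, hm⟩ := hgen ⟨w, hw⟩
    refine ⟨m, ?_⟩
    have := congrArg (Subtype.val) hm
    simpa [SubgroupClass.coe_zpow] using this.symm

end Aux

theorem stmt17 :
    ∀ α ∈ Subgroup.centralizer ({γ} : Set G), ∀ g : G,
      (QuotientAddGroup.mk (e (α * g * α⁻¹)) : LamTilde) = QuotientAddGroup.mk (e g) := by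
  intro α hα g
  have hc : γ * α = α * γ := Subgroup.mem_centralizer_iff.1 hα γ rfl
  set w : FreeGroup (Fin 3) := FreeGroup.of 0 * FreeGroup.of 1 * FreeGroup.of 2 with hw
  have hγ : γ = (w, 1) := by
    simp [γ, x, y, z, hw, Prod.ext_iff, ← ofAdd_add]
  have hcom : Commute α.1 w := by
    have h1 := congrArg Prod.fst hc
    have h2 : w * α.1 = α.1 * w := by
      simpa [hγ] using h1
    exact h2.symm
  obtain ⟨c, ⟨n, hn⟩, ⟨m, hm⟩⟩ := exists_common_power hcom
  set φ : FreeGroup (Fin 3) →* Multiplicative ℤ :=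
    FreeGroup.lift (fun j => if j = 0 then Multiplicative.ofAdd (1 : ℤ) else 1) with hφ
  have hφw : φ w = Multiplicative.ofAdd 1 := by simp [hφ, hw]
  have hcm : (φ c) ^ m = Multiplicative.ofAdd 1 := by rw [← map_zpow, ← hm, hφw]
  have hm1 : m = 1 ∨ m = -1 := by
    have hmul : m * Multiplicative.toAdd (φ c) = 1 := by
      have h' := congrArg Multiplicative.toAdd hcm
      simpa [toAdd_zpow, smul_eq_mul] using h'
    exact Int.isUnit_iff.1 (IsUnit.of_mul_eq_one _ hmul)
  have hαw : ∃ N : ℤ, α.1 = w ^ N := by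
    rcases hm1 with rfl | rfl
    · rw [zpow_one] at hm
      exact ⟨n, by rw [hn, ← hm]⟩
    · refine ⟨-n, ?_⟩
      have hc' : c = w⁻¹ := by rw [hm, zpow_neg, zpow_one, inv_inv]
      rw [hn, hc', inv_zpow, ← zpow_neg]
  obtain ⟨N, hN⟩ := hαw
  have hγN : ∀ k : ℤ, γ ^ k = (w ^ k, 1) := by
    intro k
    rw [hγ]
    exact Prod.ext rfl (one_zpow k)
  have key : α * g * α⁻¹ = γ ^ N * g * γ ^ (-N) := by
    have hα2 : α = (w ^ N, α.2) := by rw [← hN]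
    rw [hα2, hγN, hγN]
    refine Prod.ext ?_ ?_
    · show w ^ N * g.1 * (w ^ N)⁻¹ = w ^ N * g.1 * w ^ (-N)
      rw [zpow_neg]
    · show α.2 * g.2 * α.2⁻¹ = 1 * g.2 * 1
      rw [one_mul, mul_one, mul_comm α.2 g.2, mul_assoc, mul_inv_cancel, mul_one]
  rw [key, QuotientAddGroup.eq]
  have hmem : e g - e (γ ^ N * g * γ ^ (-N)) ∈ lamRel :=
    AddSubgroup.subset_closure (Or.inl (Or.inl ⟨g, N, -N, rfl⟩))
  rw [neg_add_eq_sub]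
  exact hmem
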